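/- (Theorem 4) For random access combined with ZigZag decoding under a contention limit C ≥ 1, the expected delivery time is E[T_D(n)] = Σ_{k=1}^{n} 1/p_k, where p_k = Σ_{m=1}^{min(C,k)} binom(k, m) q_e^m (1 − q_e)^{k−m} and q_e = q(1−p). Precisely, in the contention-limited random access model described in the context, T_D(n) = T_n is almost surely finite and its expectation equals Σ_{k=1}^{n} 1/p_k. -/

import Mathlib

/-!
Write `T_n` as the sum of the waiting times `T_{k+1} - T_k`. Whether the process reaches stage
`k` with `(T_k, U_k) = (t, u)` is decided by the slots up to `t`, while the later slots are
independent of them and each is useful with the same probability `p_{|u|} = p_{n-k}` (a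
binomial count of heard senders lying in `[1, C]`). Hence `P(T_{k+1} - T_k > s) = (1 - p_{n-k})^s`:
every stage is reached almost surely, and `E[T_{k+1} - T_k] = 1 / p_{n-k}`.
-/

open MeasureTheory ProbabilityTheory

/-- The contention-limited random access acknowledgment process.
`clStep n C h ω k = (T_k, U_k)` where `T_0 = 0`, `U_0 = {1,…,n}` (all senders
unacknowledged), and for `k ≥ 0`:
`T_{k+1} = inf { t > T_k : 1 ≤ #{ i ∈ U_k : h i t ω = 1 } ≤ C }` (the next slot in which
the number of heard unacknowledged senders is between `1` and the contention limit `C`),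
and `U_{k+1}` is `U_k` minus the smallest-index heard sender at time `T_{k+1}` (that
sender is acknowledged and never transmits again). -/
noncomputable def clStep {Ω : Type*} (n C : ℕ) (h : Fin n → ℕ → Ω → Bool) (ω : Ω) :
    ℕ → ℕ × Finset (Fin n)
  | 0 => (0, Finset.univ)
  | k + 1 =>
    let prev := clStep n C h ω k
    let t := sInf {t : ℕ | prev.1 < t ∧
      1 ≤ (prev.2.filter (fun i => h i t ω = true)).card ∧
      (prev.2.filter (fun i => h i t ω = true)).card ≤ C}
    (t, prev.2 \ prev.2.filter (fun i =>
      h i t ω = true ∧ ∀ j ∈ prev.2, h j t ω = true → i ≤ j))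

open scoped ENNReal

section General

variable {Ω : Type*} [MeasurableSpace Ω] {μ : Measure Ω}

lemma Nat.sInf_eq_of_forall_le_mem_iff {A B : Set ℕ} {a t : ℕ} (hAB : ∀ s ≤ t, s ∈ A ↔ s ∈ B)
    (ha : a ∈ A) (hat : a ≤ t) : sInf A = sInf B := by
  have hA : sInf A ≤ t := (Nat.sInf_le ha).trans hat
  have hAB' : sInf A ∈ B := (hAB _ hA).1 (Nat.sInf_mem ⟨a, ha⟩)
  have hB : sInf B ≤ sInf A := Nat.sInf_le hAB'
  exact le_antisymm (Nat.sInf_le ((hAB _ (hB.trans hA)).2 (Nat.sInf_mem ⟨_, hAB'⟩))) hB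

lemma measurable_nat_sInf_setOf {p : ℕ → Ω → Prop} (hp : ∀ t, MeasurableSet {ω | p t ω}) :
    Measurable fun ω => sInf {t | p t ω} := by
  refine measurable_to_nat fun ω₀ => ?_
  have hfiber : ∀ k, (fun ω => sInf {t | p t ω}) ⁻¹' {k} =
      ({ω | p k ω} ∩ ⋂ j < k, {ω | p j ω}ᶜ) ∪ ({_ω | k = 0} ∩ ⋂ t, {ω | p t ω}ᶜ) := by
    intro k
    ext ω
    simp only [Set.mem_preimage, Set.mem_singleton_iff, Set.mem_union, Set.mem_inter_iff,
      Set.mem_iInter, Set.mem_compl_iff, Set.mem_ofPred_eq]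
    constructor
    · rintro rfl
      by_cases hne : ∃ t, p t ω
      · exact .inl ⟨Nat.sInf_mem hne, fun j hj => Nat.notMem_of_lt_sInf hj⟩
      · push Not at hne
        exact .inr ⟨Nat.sInf_eq_zero.2 (.inr (Set.eq_empty_of_forall_notMem hne)), hne⟩
    · rintro (⟨hk, hlt⟩ | ⟨rfl, hnone⟩)
      · exact le_antisymm (Nat.sInf_le hk)
          (not_lt.1 fun h => hlt _ h (Nat.sInf_mem (s := {t | p t ω}) ⟨k, hk⟩))
      · exact Nat.sInf_eq_zero.2 (.inr (Set.eq_empty_of_forall_notMem hnone))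
  rw [hfiber]
  exact ((hp _).inter (.iInter fun j => .iInter fun _ => (hp j).compl)).union
    ((MeasurableSet.const _).inter (.iInter fun t => (hp t).compl))

lemma lintegral_natCast_eq_tsum_measure_lt {f : Ω → ℕ} (hf : Measurable f) :
    ∫⁻ ω, (f ω : ℝ≥0∞) ∂μ = ∑' s : ℕ, μ {ω | s < f ω} := by
  have hmeas : ∀ s : ℕ, MeasurableSet {ω | s < f ω} :=
    fun s => measurableSet_lt measurable_const hf
  have hsum : ∀ ω, (f ω : ℝ≥0∞) = ∑' s : ℕ, {ω | s < f ω}.indicator 1 ω := by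
    intro ω
    rw [tsum_eq_sum (s := Finset.range (f ω))
      fun s hs => Set.indicator_of_notMem (by simpa using hs) _,
      Finset.sum_congr rfl fun s hs =>
        Set.indicator_of_mem (s := {ω | s < f ω}) (Finset.mem_range.1 hs) 1]
    simp
  simp_rw [hsum]
  rw [lintegral_tsum fun s => (measurable_one.indicator (hmeas s)).aemeasurable]
  exact tsum_congr fun s => lintegral_indicator_one (hmeas s)

lemma ProbabilityTheory.iIndepFun.measure_inter_eq_mul_of_determined {ι β : Type*}
    [MeasurableSpace β] [Countable β] [MeasurableSingletonClass β] {X : ι → Ω → β}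
    (hX : iIndepFun X μ) (hm : ∀ i, Measurable (X i)) {S T : Finset ι} (hST : Disjoint S T)
    {A B : Set Ω} (hA : ∀ ω ω', (∀ i ∈ S, X i ω = X i ω') → ω ∈ A → ω' ∈ A)
    (hB : ∀ ω ω', (∀ i ∈ T, X i ω = X i ω') → ω ∈ B → ω' ∈ B) :
    μ (A ∩ B) = μ A * μ B := by
  have hpre : ∀ (S : Finset ι) (A : Set Ω),
      (∀ ω ω', (∀ i ∈ S, X i ω = X i ω') → ω ∈ A → ω' ∈ A) →
      A = (fun ω (i : S) => X i ω) ⁻¹' ((fun ω (i : S) => X i ω) '' A) := by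
    refine fun S A hA => (Set.subset_preimage_image _ _).antisymm ?_
    rintro ω' ⟨ω, hω, hωω'⟩
    exact hA ω ω' (fun i hi => congrFun hωω' ⟨i, hi⟩) hω
  rw [hpre S A hA, hpre T B hB]
  exact (hX.indepFun_finset S T hST hm).measure_inter_preimage_eq_mul _ _ .of_discrete .of_discrete

variable [IsProbabilityMeasure μ] {ι : Type*} [DecidableEq ι] {X : ι → Ω → Bool} {r : ℝ≥0∞}

lemma ProbabilityTheory.iIndepFun.measure_filter_eq (hX : iIndepFun X μ)
    (hm : ∀ i, Measurable (X i)) (hr : ∀ i, μ {ω | X i ω = true} = r) {u v : Finset ι}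
    (hvu : v ⊆ u) :
    μ {ω | u.filter (fun i => X i ω = true) = v} = r ^ v.card * (1 - r) ^ (u.card - v.card) := by
  have hevent : {ω | u.filter (fun i => X i ω = true) = v} =
      ⋂ i ∈ u, X i ⁻¹' {decide (i ∈ v)} := by
    ext ω
    simp only [Set.mem_ofPred_eq, Set.mem_iInter, Set.mem_preimage, Set.mem_singleton_iff,
      Finset.ext_iff, Finset.mem_filter]
    constructor
    · intro hω i hi
      simp [← hω i, hi]
    · intro hω i
      by_cases hi : i ∈ u
      · simp [hi, hω i hi]
      · simpa [hi] using fun hv => hi (hvu hv)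
  have hfactor : ∀ i, μ (X i ⁻¹' {decide (i ∈ v)}) = if i ∈ v then r else 1 - r := by
    intro i
    split_ifs with hi
    · simp only [hi, decide_true]
      exact hr i
    · have hcompl : X i ⁻¹' {false} = (X i ⁻¹' {true})ᶜ := by ext; simp
      simp only [hi, decide_false, hcompl]
      rw [prob_compl_eq_one_sub (hm i (measurableSet_singleton true))]
      exact congrArg (1 - ·) (hr i)
  rw [hevent, hX.measure_inter_preimage_eq_mul u fun _ _ => .of_discrete,
    Finset.prod_congr rfl fun i _ => hfactor i, Finset.prod_ite, Finset.prod_const,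
    Finset.prod_const, Finset.filter_mem_eq_inter, Finset.inter_eq_right.2 hvu,
    ← Finset.sdiff_eq_filter, Finset.card_sdiff_of_subset hvu]

lemma ProbabilityTheory.iIndepFun.measure_card_filter_eq [Fintype ι] (hX : iIndepFun X μ)
    (hm : ∀ i, Measurable (X i)) (hr : ∀ i, μ {ω | X i ω = true} = r) (u : Finset ι) (m : ℕ) :
    μ {ω | (u.filter fun i => X i ω = true).card = m} =
      u.card.choose m * r ^ m * (1 - r) ^ (u.card - m) := by
  have hevent : {ω | (u.filter fun i => X i ω = true).card = m} =
      ⋃ v ∈ u.powersetCard m, (fun ω => u.filter fun i => X i ω = true) ⁻¹' {v} := by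
    ext ω
    simp [Finset.mem_powersetCard]
  have hfilter : Measurable fun ω => u.filter fun i => X i ω = true :=
    (Measurable.of_discrete (f := fun w : ι → Bool => u.filter fun i => w i = true)).comp
      (measurable_pi_lambda _ hm)
  rw [hevent, measure_biUnion_finset (Set.pairwiseDisjoint_fiber _ _)
      fun v _ => hfilter (measurableSet_singleton v)]
  calc ∑ v ∈ u.powersetCard m, μ ((fun ω => u.filter fun i => X i ω = true) ⁻¹' {v})
      = ∑ v ∈ u.powersetCard m, r ^ m * (1 - r) ^ (u.card - m) :=
        Finset.sum_congr rfl fun v hv => by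
          obtain ⟨hvu, rfl⟩ := Finset.mem_powersetCard.1 hv
          exact hX.measure_filter_eq hm hr hvu
    _ = u.card.choose m * r ^ m * (1 - r) ^ (u.card - m) := by
      rw [Finset.sum_const, Finset.card_powersetCard, nsmul_eq_mul, mul_assoc]

end General

namespace ContentionLimited

variable {Ω : Type*}

def heardAt {ι : Type*} (h : ι → ℕ → Ω → Bool) (t : ℕ) (ω : Ω) : ι → Bool :=
  fun i => h i t ω

def IsUseful {ι : Type*} (C : ℕ) (u : Finset ι) (v : ι → Bool) : Prop :=
  1 ≤ (u.filter fun i => v i = true).card ∧ (u.filter fun i => v i = true).card ≤ C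

/-- `p_m`: the probability that a slot is useful when `m` senders are still unacknowledged. -/
noncomputable def successProb (r : ℝ≥0∞) (C m : ℕ) : ℝ≥0∞ :=
  ∑ j ∈ Finset.Icc 1 (min C m), m.choose j * r ^ j * (1 - r) ^ (m - j)

lemma successProb_le_one {r : ℝ≥0∞} (hr : r ≤ 1) (C m : ℕ) : successProb r C m ≤ 1 :=
  calc successProb r C m
      ≤ ∑ j ∈ Finset.range (m + 1), r ^ j * (1 - r) ^ (m - j) * m.choose j := by
        rw [successProb]
        refine Finset.sum_le_sum_of_subset_of_nonneg (fun j hj => ?_) (fun _ _ _ => bot_le)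
          |>.trans_eq (Finset.sum_congr rfl fun j _ => by ring)
        simp only [Finset.mem_Icc, Finset.mem_range] at hj ⊢
        omega
    _ = 1 := by rw [← add_pow, add_tsub_cancel_of_le hr, one_pow]

lemma successProb_ne_zero {r : ℝ≥0∞} (hr0 : r ≠ 0) (hr1 : r < 1) {C m : ℕ} (hC : 1 ≤ C)
    (hm : 1 ≤ m) : successProb r C m ≠ 0 := by
  rw [successProb, Ne, Finset.sum_eq_zero_iff, not_forall]
  refine ⟨1, fun h1 => ?_⟩
  have := h1 (Finset.mem_Icc.2 ⟨le_rfl, le_min hC hm⟩)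
  simp only [Nat.choose_one_right, pow_one, mul_eq_zero, Nat.cast_eq_zero, pow_eq_zero_iff',
    tsub_eq_zero_iff_le, not_le.2 hr1, false_and, or_false, hr0] at this
  omega

lemma toReal_successProb {r : ℝ} (hr0 : 0 ≤ r) (hr1 : r ≤ 1) (C m : ℕ) :
    (successProb (ENNReal.ofReal r) C m).toReal =
      ∑ j ∈ Finset.Icc 1 (min C m), (m.choose j : ℝ) * r ^ j * (1 - r) ^ (m - j) := by
  rw [successProb, ENNReal.toReal_sum fun j _ => by finiteness]
  refine Finset.sum_congr rfl fun j _ => ?_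
  rw [← ENNReal.ofReal_one, ← ENNReal.ofReal_sub _ hr0]
  simp [ENNReal.toReal_ofReal hr0, ENNReal.toReal_ofReal (sub_nonneg.2 hr1)]

def eraseFirstHeard {n : ℕ} (u : Finset (Fin n)) (v : Fin n → Bool) : Finset (Fin n) :=
  u \ u.filter fun i => v i = true ∧ ∀ j ∈ u, v j = true → i ≤ j

lemma eraseFirstHeard_eq_erase_min' {n : ℕ} {u : Finset (Fin n)} {v : Fin n → Bool}
    (hne : (u.filter fun i => v i = true).Nonempty) :
    eraseFirstHeard u v = u.erase ((u.filter fun i => v i = true).min' hne) := by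
  have hmin := Finset.mem_filter.1 (Finset.min'_mem _ hne)
  have hle : ∀ i ∈ u, v i = true → (u.filter fun i => v i = true).min' hne ≤ i :=
    fun i hiu hi => Finset.min'_le _ _ (Finset.mem_filter.2 ⟨hiu, hi⟩)
  ext i
  simp only [eraseFirstHeard, Finset.mem_sdiff, Finset.mem_filter, Finset.mem_erase]
  constructor
  · rintro ⟨hiu, hfirst⟩
    exact ⟨fun hi => hfirst ⟨hiu, hi ▸ hmin.2, fun j hju hj => hi ▸ hle j hju hj⟩, hiu⟩
  · rintro ⟨hne', hiu⟩
    exact ⟨hiu, fun ⟨_, hi, hfirst⟩ =>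
      hne' (le_antisymm (hfirst _ hmin.1 hmin.2) (hle i hiu hi))⟩

lemma card_eraseFirstHeard_add_one {n : ℕ} {u : Finset (Fin n)} {v : Fin n → Bool}
    (hv : 1 ≤ (u.filter fun i => v i = true).card) : (eraseFirstHeard u v).card + 1 = u.card := by
  have hne := Finset.card_pos.1 hv
  rw [eraseFirstHeard_eq_erase_min' hne,
    Finset.card_erase_add_one (Finset.mem_filter.1 (Finset.min'_mem _ hne)).1]

section Dynamics

variable (n C : ℕ) (h : Fin n → ℕ → Ω → Bool)

noncomputable def ackTime (ω : Ω) (k : ℕ) : ℕ := (clStep n C h ω k).1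

noncomputable def unacked (ω : Ω) (k : ℕ) : Finset (Fin n) := (clStep n C h ω k).2

def usefulSlots (k : ℕ) (ω : Ω) : Set ℕ :=
  {t | ackTime n C h ω k < t ∧ IsUseful C (unacked n C h ω k) (heardAt h t ω)}

/-- None of the infima defining `T_1, …, T_k` is taken over the empty set (where `sInf ∅ = 0`). -/
def Reaches (k : ℕ) : Set Ω := {ω | ∀ j < k, (usefulSlots n C h j ω).Nonempty}

variable {n C h} {ω : Ω} {k : ℕ}

lemma clStep_succ : clStep n C h ω (k + 1) =
    (ackTime n C h ω (k + 1),
      eraseFirstHeard (unacked n C h ω k) (heardAt h (ackTime n C h ω (k + 1)) ω)) :=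
  rfl

lemma mem_reaches_succ :
    ω ∈ Reaches n C h (k + 1) ↔ ω ∈ Reaches n C h k ∧ (usefulSlots n C h k ω).Nonempty :=
  Nat.forall_lt_succ_right

lemma reaches_antitone : Antitone (Reaches n C h) :=
  antitone_nat_of_succ_le fun _ _ hω => (mem_reaches_succ.1 hω).1

lemma ackTime_succ_mem (hω : ω ∈ Reaches n C h (k + 1)) :
    ackTime n C h ω (k + 1) ∈ usefulSlots n C h k ω :=
  Nat.sInf_mem (mem_reaches_succ.1 hω).2

lemma ackTime_lt_succ (hω : ω ∈ Reaches n C h (k + 1)) :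
    ackTime n C h ω k < ackTime n C h ω (k + 1) :=
  (ackTime_succ_mem hω).1

lemma card_unacked_add (hω : ω ∈ Reaches n C h k) : (unacked n C h ω k).card + k = n := by
  induction k with
  | zero => simp [unacked, clStep]
  | succ k ih =>
    have := card_eraseFirstHeard_add_one (ackTime_succ_mem hω).2.1
    change (eraseFirstHeard (unacked n C h ω k) (heardAt h (ackTime n C h ω (k + 1)) ω)).card
      + (k + 1) = n
    have := ih (reaches_antitone k.le_succ hω)
    omega

lemma ackTime_eq_sum_sub (hω : ω ∈ Reaches n C h k) :
    ackTime n C h ω k =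
      ∑ j ∈ Finset.range k, (ackTime n C h ω (j + 1) - ackTime n C h ω j) := by
  induction k with
  | zero => rfl
  | succ k ih =>
    rw [Finset.sum_range_succ, ← ih (reaches_antitone k.le_succ hω),
      Nat.add_sub_cancel' (ackTime_lt_succ hω).le]

lemma reaches_and_clStep_eq_of_heardAt_eq {ω' : Ω} {t : ℕ}
    (hag : ∀ s, 1 ≤ s → s ≤ t → heardAt h s ω = heardAt h s ω') :
    ∀ k, ω ∈ Reaches n C h k → ackTime n C h ω k ≤ t →
      ω' ∈ Reaches n C h k ∧ clStep n C h ω' k = clStep n C h ω k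
  | 0, _, _ => ⟨fun _ hj => absurd hj (Nat.not_lt_zero _), rfl⟩
  | k + 1, hω, hT => by
    have hlt := ackTime_lt_succ hω
    obtain ⟨hω'k, hstep⟩ :=
      reaches_and_clStep_eq_of_heardAt_eq hag k (reaches_antitone k.le_succ hω) (by omega)
    have hslots : ∀ s ≤ t, s ∈ usefulSlots n C h k ω ↔ s ∈ usefulSlots n C h k ω' := by
      intro s hs
      simp only [usefulSlots, ackTime, unacked, hstep, Set.mem_ofPred_eq]
      exact and_congr_right fun hks => by rw [hag s (by omega) hs]
    have hmem := ackTime_succ_mem hω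
    have hT' : ackTime n C h ω' (k + 1) = ackTime n C h ω (k + 1) :=
      (Nat.sInf_eq_of_forall_le_mem_iff hslots hmem hT).symm
    refine ⟨mem_reaches_succ.2 ⟨hω'k, _, (hslots _ hT).1 hmem⟩, ?_⟩
    rw [clStep_succ, clStep_succ, hT', ← hag _ (by omega) hT]
    simp only [unacked, hstep]

end Dynamics

section Windows

variable {n C : ℕ} {h : Fin n → ℕ → Ω → Bool}

def idleWindow (C : ℕ) (h : Fin n → ℕ → Ω → Bool) (u : Finset (Fin n)) (a s : ℕ) : Set Ω :=
  {ω | ∀ t, a < t → t ≤ a + s → ¬ IsUseful C u (heardAt h t ω)}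

variable (n C h) in
def idleAfter (k s : ℕ) : Set Ω :=
  {ω | ω ∈ idleWindow C h (unacked n C h ω k) (ackTime n C h ω k) s}

variable (n C h) in
def stage (k : ℕ) (y : ℕ × Finset (Fin n)) : Set Ω :=
  Reaches n C h k ∩ {ω | clStep n C h ω k = y}

lemma idleWindow_zero (u : Finset (Fin n)) (a : ℕ) : idleWindow C h u a 0 = Set.univ :=
  Set.eq_univ_of_forall fun _ _ h1 h2 => absurd h1 (by omega)

lemma idleAfter_zero (k : ℕ) : idleAfter n C h k 0 = Set.univ := by
  simp [idleAfter, idleWindow_zero]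

lemma idleWindow_succ (u : Finset (Fin n)) (a s : ℕ) :
    idleWindow C h u a (s + 1) =
      idleWindow C h u a s ∩ {ω | ¬ IsUseful C u (heardAt h (a + s + 1) ω)} := by
  ext ω
  simp only [idleWindow, Set.mem_inter_iff, Set.mem_ofPred_eq]
  constructor
  · intro hω
    exact ⟨fun t h1 h2 => hω t h1 (by omega), hω _ (by omega) (by omega)⟩
  · rintro ⟨hω, hlast⟩ t h1 h2
    rcases (show t ≤ a + s ∨ t = a + s + 1 by omega) with ht | rfl
    exacts [hω t h1 ht, hlast]

lemma reaches_inter_idleAfter_eq_iUnion (k s : ℕ) :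
    Reaches n C h k ∩ idleAfter n C h k s =
      ⋃ y : ℕ × Finset (Fin n), stage n C h k y ∩ idleWindow C h y.2 y.1 s := by
  ext ω
  simp only [Set.mem_inter_iff, Set.mem_iUnion, stage, idleAfter, Set.mem_ofPred_eq]
  constructor
  · rintro ⟨hω, hidle⟩
    exact ⟨clStep n C h ω k, ⟨hω, rfl⟩, hidle⟩
  · rintro ⟨y, ⟨hω, rfl⟩, hidle⟩
    exact ⟨hω, hidle⟩

lemma card_of_mem_stage {k : ℕ} {y : ℕ × Finset (Fin n)} {ω : Ω} (hω : ω ∈ stage n C h k y) :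
    y.2.card = n - k := by
  have := card_unacked_add hω.1
  rw [unacked, hω.2] at this
  omega

lemma reaches_diff_subset_idleAfter (k s : ℕ) :
    Reaches n C h k \ Reaches n C h (k + 1) ⊆ Reaches n C h k ∩ idleAfter n C h k s := by
  rintro ω ⟨hω, hnext⟩
  exact ⟨hω, fun t h1 _ huseful => hnext (mem_reaches_succ.2 ⟨hω, t, h1, huseful⟩)⟩

lemma lt_ackTime_sub_iff {k s : ℕ} {ω : Ω} (hω : ω ∈ Reaches n C h (k + 1)) :
    s < ackTime n C h ω (k + 1) - ackTime n C h ω k ↔ ω ∈ idleAfter n C h k s := by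
  have hmem := ackTime_succ_mem hω
  constructor
  · intro hs t h1 h2 huseful
    have : ackTime n C h ω (k + 1) ≤ t := Nat.sInf_le ⟨h1, huseful⟩
    omega
  · intro hidle
    by_contra hle
    exact hidle _ hmem.1 (by omega) hmem.2

end Windows

section Measurability

variable [MeasurableSpace Ω] {μ : Measure Ω}

section

variable {ι : Type*} {h : ι → ℕ → Ω → Bool}

lemma measurable_heardAt (hm : ∀ i t, Measurable (h i t)) (t : ℕ) :
    Measurable (heardAt h t) :=
  measurable_pi_lambda _ fun i => hm i t

lemma measurable_heardAt_comp (hm : ∀ i t, Measurable (h i t)) {τ : Ω → ℕ}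
    (hτ : Measurable τ) : Measurable fun ω => heardAt h (τ ω) ω :=
  (measurable_from_prod_countable_left (f := fun p : Ω × ℕ => heardAt h p.2 p.1)
    (measurable_heardAt hm)).comp (measurable_id.prodMk hτ)

end

variable {n C : ℕ} {h : Fin n → ℕ → Ω → Bool}

lemma measurable_clStep (hm : ∀ i t, Measurable (h i t)) :
    ∀ k, Measurable fun ω => clStep n C h ω k
  | 0 => measurable_const
  | k + 1 => by
    let τ : Ω × (ℕ × Finset (Fin n)) → ℕ := fun p =>
      sInf {t | p.2.1 < t ∧ IsUseful C p.2.2 (heardAt h t p.1)}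
    have hnext : Measurable fun p : Ω × (ℕ × Finset (Fin n)) =>
        (τ p, eraseFirstHeard p.2.2 (heardAt h (τ p) p.1)) := by
      refine measurable_from_prod_countable_left fun y => ?_
      have hτ : Measurable fun ω => τ (ω, y) :=
        measurable_nat_sInf_setOf fun t => measurable_heardAt hm t
          (MeasurableSet.of_discrete (s := {v | y.1 < t ∧ IsUseful C y.2 v}))
      exact hτ.prodMk
        ((Measurable.of_discrete (f := eraseFirstHeard y.2)).comp (measurable_heardAt_comp hm hτ))
    exact hnext.comp (measurable_id.prodMk (measurable_clStep hm k))

lemma measurable_ackTime (hm : ∀ i t, Measurable (h i t)) (k : ℕ) :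
    Measurable fun ω => ackTime n C h ω k :=
  measurable_fst.comp (measurable_clStep hm k)

lemma measurableSet_reaches (hm : ∀ i t, Measurable (h i t)) (k : ℕ) :
    MeasurableSet (Reaches n C h k) :=
  measurableSet_setOfPred.2 <| .forall fun j => measurable_const.imp <| .exists fun t =>
    (Measurable.of_discrete (f := fun p : (ℕ × Finset (Fin n)) × (Fin n → Bool) =>
      p.1.1 < t ∧ IsUseful C p.1.2 p.2)).comp
        ((measurable_clStep hm j).prodMk (measurable_heardAt hm t))

lemma measurableSet_idleWindow (hm : ∀ i t, Measurable (h i t)) (u : Finset (Fin n))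
    (a s : ℕ) : MeasurableSet (idleWindow C h u a s) :=
  measurableSet_setOfPred.2 <| .forall fun t => measurable_const.imp <| measurable_const.imp <|
    (Measurable.of_discrete (f := fun v : Fin n → Bool => ¬ IsUseful C u v)).comp
      (measurable_heardAt hm t)

lemma measurableSet_stage (hm : ∀ i t, Measurable (h i t)) (k : ℕ) (y : ℕ × Finset (Fin n)) :
    MeasurableSet (stage n C h k y) :=
  (measurableSet_reaches hm k).inter (measurable_clStep hm k (measurableSet_singleton y))

end Measurability

section Probability

variable [MeasurableSpace Ω] {μ : Measure Ω}

structure BernoulliReception {ι : Type*} (μ : Measure Ω) (h : ι → ℕ → Ω → Bool) (r : ℝ≥0∞) :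
    Prop where
  measurable : ∀ i t, Measurable (h i t)
  indepFun : iIndepFun (fun it : ι × ℕ => h it.1 (it.2 + 1)) μ
  measure_eq : ∀ i t, 1 ≤ t → μ {ω | h i t ω = true} = r

lemma measure_isUseful {ι : Type*} [Fintype ι] [DecidableEq ι] [IsProbabilityMeasure μ]
    {X : ι → Ω → Bool} {r : ℝ≥0∞} (hX : iIndepFun X μ) (hm : ∀ i, Measurable (X i))
    (hr : ∀ i, μ {ω | X i ω = true} = r) (C : ℕ) (u : Finset ι) :
    μ {ω | IsUseful C u fun i => X i ω} = successProb r C u.card := by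
  have hevent : {ω | IsUseful C u fun i => X i ω} =
      ⋃ j ∈ Finset.Icc 1 (min C u.card),
        (fun ω => (u.filter fun i => X i ω = true).card) ⁻¹' {j} := by
    ext ω
    simp only [IsUseful, Set.mem_ofPred_eq, Set.mem_iUnion, Set.mem_preimage,
      Set.mem_singleton_iff, Finset.mem_Icc, le_min_iff, exists_prop]
    constructor
    · intro hω
      exact ⟨_, ⟨hω.1, hω.2, Finset.card_filter_le _ _⟩, rfl⟩
    · rintro ⟨j, ⟨hj1, hjC, -⟩, rfl⟩
      exact ⟨hj1, hjC⟩
  have hcard : Measurable fun ω => (u.filter fun i => X i ω = true).card :=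
    (Measurable.of_discrete (f := fun w : ι → Bool => (u.filter fun i => w i = true).card)).comp
      (measurable_pi_lambda _ hm)
  rw [hevent, measure_biUnion_finset (Set.pairwiseDisjoint_fiber _ _)
    fun j _ => hcard (measurableSet_singleton j)]
  exact Finset.sum_congr rfl fun j _ => hX.measure_card_filter_eq hm hr u j

namespace BernoulliReception

variable {ι : Type*} {h : ι → ℕ → Ω → Bool} {r : ℝ≥0∞}

lemma iIndepFun_slot (hh : BernoulliReception μ h r) {t : ℕ} (ht : 1 ≤ t) :
    iIndepFun (fun i => h i t) μ := by
  have := hh.indepFun.precomp (g := fun i => (i, t - 1)) fun i j hij => congrArg Prod.fst hij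
  simpa only [Nat.sub_add_cancel ht] using this

lemma measure_inter_eq_mul [Fintype ι] (hh : BernoulliReception μ h r) (m : ℕ) {A B : Set Ω}
    (hA : ∀ ω ω', (∀ t, 1 ≤ t → t ≤ m → heardAt h t ω = heardAt h t ω') → ω ∈ A → ω' ∈ A)
    (hB : ∀ ω ω', heardAt h (m + 1) ω = heardAt h (m + 1) ω' → ω ∈ B → ω' ∈ B) :
    μ (A ∩ B) = μ A * μ B := by
  refine hh.indepFun.measure_inter_eq_mul_of_determined (fun it => hh.measurable _ _)
    (S := Finset.univ ×ˢ Finset.range m) (T := Finset.univ ×ˢ {m}) ?_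
    (fun ω ω' hag => hA ω ω' fun t ht htm => funext fun i => ?_)
    (fun ω ω' hag => hB ω ω' (funext fun i => hag (i, m) (by simp)))
  · simpa [Finset.disjoint_left] using fun _ b hb => hb.ne'
  · simpa [heardAt, Nat.sub_add_cancel ht] using hag (i, t - 1) (by simp; omega)

lemma measure_isUseful [IsProbabilityMeasure μ] [Fintype ι] [DecidableEq ι]
    (hh : BernoulliReception μ h r) (C : ℕ) (u : Finset ι) {t : ℕ}
    (ht : 1 ≤ t) : μ {ω | IsUseful C u (heardAt h t ω)} = successProb r C u.card :=
  ContentionLimited.measure_isUseful (hh.iIndepFun_slot ht) (fun i => hh.measurable i t)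
    (fun i => hh.measure_eq i t ht) C u

end BernoulliReception

variable [IsProbabilityMeasure μ] {n C : ℕ} {h : Fin n → ℕ → Ω → Bool} {r : ℝ≥0∞}

/-- The stage event is decided by the slots up to `T_k`, the window by the later slots. -/
lemma measure_stage_inter_idleWindow (hh : BernoulliReception μ h r) (k : ℕ)
    (y : ℕ × Finset (Fin n)) (s : ℕ) :
    μ (stage n C h k y ∩ idleWindow C h y.2 y.1 s) =
      μ (stage n C h k y) * (1 - successProb r C y.2.card) ^ s := by
  induction s with
  | zero => rw [idleWindow_zero, Set.inter_univ, pow_zero, mul_one]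
  | succ s ih =>
    have hslot : μ {ω | ¬ IsUseful C y.2 (heardAt h (y.1 + s + 1) ω)} =
        1 - successProb r C y.2.card := by
      rw [← hh.measure_isUseful C y.2 (by omega : 1 ≤ y.1 + s + 1)]
      exact prob_compl_eq_one_sub
        (measurable_heardAt hh.measurable _
          (MeasurableSet.of_discrete (s := {v | IsUseful C y.2 v})))
    rw [idleWindow_succ, ← Set.inter_assoc, hh.measure_inter_eq_mul (y.1 + s) ?past ?next, ih,
      hslot, pow_succ, mul_assoc]
    case past =>
      rintro ω ω' hag ⟨⟨hreach, hy⟩, hidle⟩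
      obtain ⟨hreach', hy'⟩ := reaches_and_clStep_eq_of_heardAt_eq hag k hreach
        (by rw [ackTime, hy]; omega)
      refine ⟨⟨hreach', hy'.trans hy⟩, fun t h1 h2 => ?_⟩
      rw [← hag t (by omega) h2]
      exact hidle t h1 h2
    case next =>
      intro ω ω' hag
      simp only [Set.mem_ofPred_eq, hag, imp_self]

lemma measure_reaches_inter_idleAfter (hh : BernoulliReception μ h r) (k s : ℕ) :
    μ (Reaches n C h k ∩ idleAfter n C h k s) =
      μ (Reaches n C h k) * (1 - successProb r C (n - k)) ^ s := by
  have hdecomp : ∀ s, μ (Reaches n C h k ∩ idleAfter n C h k s) =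
      ∑' y, μ (stage n C h k y) * (1 - successProb r C (n - k)) ^ s := by
    intro s
    rw [reaches_inter_idleAfter_eq_iUnion, measure_iUnion
      (fun y z hyz => Set.disjoint_left.2 fun ω hy hz => hyz (hy.1.2.symm.trans hz.1.2))
      fun y => (measurableSet_stage hh.measurable k y).inter
        (measurableSet_idleWindow hh.measurable _ _ _)]
    refine tsum_congr fun y => ?_
    rw [measure_stage_inter_idleWindow hh]
    rcases (stage n C h k y).eq_empty_or_nonempty with hempty | ⟨ω, hω⟩
    · simp [hempty]
    · rw [card_of_mem_stage hω]
  have h0 := hdecomp 0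
  simp only [pow_zero, mul_one, idleAfter_zero, Set.inter_univ] at h0
  rw [hdecomp, ENNReal.tsum_mul_right, ← h0]

variable (μ) in
lemma ae_mem_reaches (hh : BernoulliReception μ h r) (hC : 1 ≤ C) (hr0 : r ≠ 0) (hr1 : r < 1) :
    ∀ k ≤ n, ∀ᵐ ω ∂μ, ω ∈ Reaches n C h k
  | 0, _ => ae_of_all _ fun _ j hj => absurd hj (Nat.not_lt_zero j)
  | k + 1, hk => by
    have hq : 1 - successProb r C (n - k) < 1 :=
      ENNReal.sub_lt_self ENNReal.one_ne_top one_ne_zero (successProb_ne_zero hr0 hr1 hC (by omega))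
    have hnull : μ (Reaches n C h k \ Reaches n C h (k + 1)) = 0 :=
      le_antisymm (ge_of_tendsto' (ENNReal.tendsto_pow_atTop_nhds_zero_of_lt_one hq) fun s =>
        calc μ (Reaches n C h k \ Reaches n C h (k + 1))
            ≤ μ (Reaches n C h k ∩ idleAfter n C h k s) :=
              measure_mono (reaches_diff_subset_idleAfter k s)
          _ = μ (Reaches n C h k) * (1 - successProb r C (n - k)) ^ s :=
              measure_reaches_inter_idleAfter hh k s
          _ ≤ (1 - successProb r C (n - k)) ^ s := mul_le_of_le_one_left' prob_le_one) bot_le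
    filter_upwards [ae_mem_reaches hh hC hr0 hr1 k (by omega),
      measure_eq_zero_iff_ae_notMem.1 hnull] with ω hω hnot
    by_contra hnext
    exact hnot ⟨hω, hnext⟩

lemma measure_lt_ackTime_sub (hh : BernoulliReception μ h r) (hC : 1 ≤ C) (hr0 : r ≠ 0)
    (hr1 : r < 1) {k : ℕ} (hk : k < n) (s : ℕ) :
    μ {ω | s < ackTime n C h ω (k + 1) - ackTime n C h ω k} =
      (1 - successProb r C (n - k)) ^ s := by
  have hreach := ae_mem_reaches μ hh hC hr0 hr1
  have hone : μ (Reaches n C h k) = 1 := by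
    rw [← measure_univ (μ := μ)]
    exact (ae_iff_measure_eq (measurableSet_reaches hh.measurable k).nullMeasurableSet).1
      (hreach k hk.le)
  calc μ {ω | s < ackTime n C h ω (k + 1) - ackTime n C h ω k}
      = μ (Reaches n C h k ∩ idleAfter n C h k s) := by
        refine measure_congr (Filter.eventuallyEq_set.2 ?_)
        filter_upwards [hreach (k + 1) hk, hreach k hk.le] with ω hsucc hω
        exact (lt_ackTime_sub_iff hsucc).trans ⟨fun hidle => ⟨hω, hidle⟩, And.right⟩
    _ = (1 - successProb r C (n - k)) ^ s := by
        rw [measure_reaches_inter_idleAfter hh, hone, one_mul]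

lemma lintegral_ackTime (hh : BernoulliReception μ h r) (hC : 1 ≤ C) (hr0 : r ≠ 0)
    (hr1 : r < 1) :
    ∫⁻ ω, (ackTime n C h ω n : ℝ≥0∞) ∂μ = ∑ k ∈ Finset.range n, (successProb r C (n - k))⁻¹ := by
  have hgap : ∀ k, Measurable fun ω => ackTime n C h ω (k + 1) - ackTime n C h ω k :=
    fun k => (measurable_ackTime hh.measurable (k + 1)).sub (measurable_ackTime hh.measurable k)
  calc ∫⁻ ω, (ackTime n C h ω n : ℝ≥0∞) ∂μ
      = ∫⁻ ω, ∑ k ∈ Finset.range n,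
          ((ackTime n C h ω (k + 1) - ackTime n C h ω k : ℕ) : ℝ≥0∞) ∂μ :=
        lintegral_congr_ae <| (ae_mem_reaches μ hh hC hr0 hr1 n le_rfl).mono fun ω hω => by
          dsimp only
          rw [ackTime_eq_sum_sub hω, Nat.cast_sum]
    _ = ∑ k ∈ Finset.range n,
          ∫⁻ ω, ((ackTime n C h ω (k + 1) - ackTime n C h ω k : ℕ) : ℝ≥0∞) ∂μ :=
        lintegral_finsetSum _ fun k _ => measurable_from_nat.comp (hgap k)
    _ = ∑ k ∈ Finset.range n, (successProb r C (n - k))⁻¹ :=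
        Finset.sum_congr rfl fun k hk => by
          rw [lintegral_natCast_eq_tsum_measure_lt (hgap k),
            tsum_congr (measure_lt_ackTime_sub hh hC hr0 hr1 (Finset.mem_range.1 hk)),
            ENNReal.tsum_geometric, ENNReal.sub_sub_cancel ENNReal.one_ne_top
              (successProb_le_one hr1.le C _)]

end Probability

end ContentionLimited

open ContentionLimited

theorem contention_limited_random_access_delivery_time_general
    {Ω : Type*} [MeasurableSpace Ω] (μ : Measure Ω) [IsProbabilityMeasure μ]
    (p q : ℝ) (hp0 : 0 < p) (hp1 : p < 1) (hq0 : 0 < q) (hq1 : q ≤ 1)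
    (n C : ℕ) (hC : 1 ≤ C)
    (h : Fin n → ℕ → Ω → Bool) (hmeas : ∀ i t, Measurable (h i t))
    (hindep : iIndepFun
      (fun it : Fin n × ℕ => h it.1 (it.2 + 1)) μ)
    (hdist : ∀ (i : Fin n) (t : ℕ), 1 ≤ t →
      μ {ω | h i t ω = true} = ENNReal.ofReal (q * (1 - p))) :
    (∀ᵐ ω ∂μ, ∀ k < n,
      {t : ℕ | (clStep n C h ω k).1 < t ∧
        1 ≤ ((clStep n C h ω k).2.filter (fun i => h i t ω = true)).card ∧
        ((clStep n C h ω k).2.filter (fun i => h i t ω = true)).card ≤ C}.Nonempty) ∧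
    ∫ ω, ((clStep n C h ω n).1 : ℝ) ∂μ =
      ∑ k ∈ Finset.Icc 1 n,
        1 / (∑ m ∈ Finset.Icc 1 (min C k),
          (k.choose m : ℝ) * (q * (1 - p)) ^ m * (1 - q * (1 - p)) ^ (k - m)) := by
  have hqe0 : 0 < q * (1 - p) := mul_pos hq0 (sub_pos.2 hp1)
  have hqe1 : q * (1 - p) < 1 := by nlinarith
  have hh : BernoulliReception μ h (ENNReal.ofReal (q * (1 - p))) := ⟨hmeas, hindep, hdist⟩
  have hr0 := (ENNReal.ofReal_pos.2 hqe0).ne'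
  have hr1 := ENNReal.ofReal_lt_one.2 hqe1
  refine ⟨ae_mem_reaches μ hh hC hr0 hr1 n le_rfl, ?_⟩
  change ∫ ω, (ackTime n C h ω n : ℝ) ∂μ = _
  rw [integral_eq_lintegral_of_nonneg_ae (ae_of_all _ fun ω => Nat.cast_nonneg _)
    (measurable_from_nat.comp (measurable_ackTime hmeas n)).aestronglyMeasurable]
  simp only [ENNReal.ofReal_natCast]
  rw [lintegral_ackTime hh hC hr0 hr1, ENNReal.toReal_sum fun k hk => ENNReal.inv_ne_top.2
    (successProb_ne_zero hr0 hr1 hC (by simp at hk; omega)), Finset.range_eq_Ico,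
    Finset.sum_Ico_reflect (fun m => (successProb _ C m)⁻¹.toReal) 0 n.le_succ]
  simp only [Nat.add_sub_cancel_left, Nat.sub_zero, Finset.Ico_add_one_right_eq_Icc]
  refine Finset.sum_congr rfl fun m _ => ?_
  rw [ENNReal.toReal_inv, toReal_successProb hqe0.le hqe1.le, one_div]

/-- **Theorem 4 (random access with ZigZag decoding).** In the contention-limited random
access model with `n` senders, erasure probability `p ∈ (0,1)`, access probability
`q ∈ (0,1]`, `q_e = q(1-p)`, and contention limit `C ≥ 1`, where the indicators `h i t`
that sender `i` is heard in slot `t ≥ 1` are i.i.d. with `P(h i t = 1) = q_e`, the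
delivery time `T_D(n) = T_n = (clStep n C h ω n).1` is almost surely finite (each set
whose infimum defines `T_{k+1}` is a.s. nonempty) and
`E[T_D(n)] = ∑_{k=1}^n 1/p_k` where
`p_k = ∑_{m=1}^{min(C,k)} binom(k,m) q_e^m (1-q_e)^{k-m}`. -/
theorem contention_limited_random_access_delivery_time
    {Ω : Type*} [MeasurableSpace Ω] (μ : Measure Ω) [IsProbabilityMeasure μ]
    (p q : ℝ) (hp0 : 0 < p) (hp1 : p < 1) (hq0 : 0 < q) (hq1 : q ≤ 1)
    (n C : ℕ) (hn : 1 ≤ n) (hC : 1 ≤ C)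
    (h : Fin n → ℕ → Ω → Bool) (hmeas : ∀ i t, Measurable (h i t))
    (hindep : iIndepFun
      (fun it : Fin n × ℕ => h it.1 (it.2 + 1)) μ)
    (hdist : ∀ (i : Fin n) (t : ℕ), 1 ≤ t →
      μ {ω | h i t ω = true} = ENNReal.ofReal (q * (1 - p))) :
    (∀ᵐ ω ∂μ, ∀ k < n,
      {t : ℕ | (clStep n C h ω k).1 < t ∧
        1 ≤ ((clStep n C h ω k).2.filter (fun i => h i t ω = true)).card ∧
        ((clStep n C h ω k).2.filter (fun i => h i t ω = true)).card ≤ C}.Nonempty) ∧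
    ∫ ω, ((clStep n C h ω n).1 : ℝ) ∂μ =
      ∑ k ∈ Finset.Icc 1 n,
        1 / (∑ m ∈ Finset.Icc 1 (min C k),
          (k.choose m : ℝ) * (q * (1 - p)) ^ m * (1 - q * (1 - p)) ^ (k - m)) :=
  contention_limited_random_access_delivery_time_general μ p q hp0 hp1 hq0 hq1 n C hC h hmeas hindep
    hdist
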